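/- arXiv:2210.09442 — 2 statements merged into one kernel-verified Lean document; each statement's English description precedes it below -/
import Mathlib

section
/- For every positive integer q, the Gamma function satisfies (2πq)^{1/2} (q/e)^q exp(1/(12q+1)) < Γ(q+1) < (2πq)^{1/2} (q/e)^q exp(1/(12q)). -/
/-!
With `sₙ = n! / (√(2n) (n/e)ⁿ) → √π`, the difference `dₙ = log sₙ - log sₙ₊₁` has the expansion
`∑_{k ≥ 1} rᵏ / (2k + 1)` with `r = (2n + 1)⁻²`. Bounding the coefficients `1 / (2k + 1)` above by
`1 / 3` and below by `3⁻ᵏ` (strictly from `k = 2` on) and summing the geometric series gives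
`1/(12n+1) - 1/(12(n+1)+1) < dₙ < 1/(12n) - 1/(12(n+1))`. Telescoping these bounds from `n` to
infinity gives `√π e^{1/(12n+1)} < sₙ < √π e^{1/(12n)}`, which is the claim since `Γ(n+1) = n!`.
-/

open Real Filter Topology

theorem lt_add_of_tendsto_of_forall_sub_succ_lt {x g : ℕ → ℝ} {L : ℝ}
    (hx : Tendsto x atTop (𝓝 L)) (hg : Tendsto g atTop (𝓝 0))
    (h : ∀ n, x n - x (n + 1) < g n - g (n + 1)) (n : ℕ) :
    x n < L + g n := by
  have hmono : StrictMono fun n ↦ x n - g n :=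
    strictMono_nat_of_lt_succ fun n ↦ by linarith [h n]
  have hlim : Tendsto (fun n ↦ x n - g n) atTop (𝓝 L) := by simpa using hx.sub hg
  linarith [hmono n.lt_succ_self, hmono.monotone.ge_of_tendsto hlim (n + 1)]

theorem add_lt_of_tendsto_of_forall_lt_sub_succ {x g : ℕ → ℝ} {L : ℝ}
    (hx : Tendsto x atTop (𝓝 L)) (hg : Tendsto g atTop (𝓝 0))
    (h : ∀ n, g n - g (n + 1) < x n - x (n + 1)) (n : ℕ) :
    L + g n < x n := by
  have := lt_add_of_tendsto_of_forall_sub_succ_lt hx.neg (by simpa using hg.neg)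
    (fun n ↦ by linarith [h n]) n
  linarith

theorem hasSum_geometric_succ_of_lt_one {r : ℝ} (h₀ : 0 ≤ r) (h₁ : r < 1) :
    HasSum (fun k : ℕ ↦ r ^ (k + 1)) (r / (1 - r)) := by
  simpa [pow_succ', div_eq_mul_inv] using (hasSum_geometric_of_lt_one h₀ h₁).mul_left r

theorem tendsto_one_div_mul_natCast_succ_add (a b : ℝ) (ha : 0 < a) :
    Tendsto (fun n : ℕ ↦ 1 / (a * ((n + 1 : ℕ) : ℝ) + b)) atTop (𝓝 0) := by
  simp only [one_div]
  refine Tendsto.inv_tendsto_atTop (tendsto_atTop_add_const_right _ b ?_)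
  exact (tendsto_natCast_atTop_atTop.comp (tendsto_add_atTop_nat 1)).const_mul_atTop ha

theorem one_div_three_pow_succ_le (k : ℕ) :
    ((1 : ℝ) / 3) ^ (k + 1) ≤ 1 / (2 * ((k + 1 : ℕ) : ℝ) + 1) := by
  rw [one_div_pow]
  gcongr
  have := one_add_mul_le_pow (a := (2 : ℝ)) (by norm_num) (k + 1)
  norm_num at this ⊢
  linarith

namespace Stirling

theorem log_stirlingSeq_sdiff_lt (m : ℕ) :
    log (stirlingSeq (m + 1)) - log (stirlingSeq (m + 2)) <
      1 / (12 * ((m + 1 : ℕ) : ℝ)) - 1 / (12 * ((m + 2 : ℕ) : ℝ)) := by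
  have hsum := log_stirlingSeq_sdiff_hasSum m
  have hsucc : ((m + 2 : ℕ) : ℝ) = ((m + 1 : ℕ) : ℝ) + 1 := by push_cast; ring
  set N : ℝ := ((m + 1 : ℕ) : ℝ)
  have hN : 1 ≤ N := by simp [N]
  set r : ℝ := (1 / (2 * N + 1)) ^ 2 with hr
  have hr₁ : r < 1 := by rw [hr, div_pow, div_lt_one (by positivity)]; nlinarith
  have hcoef (k : ℕ) : (1 : ℝ) / (2 * ((k + 1 : ℕ) : ℝ) + 1) ≤ 1 / 3 := by
    gcongr; push_cast; linarith [k.cast_nonneg (α := ℝ)]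
  have hlt := hasSum_lt (i := 1)
    (fun k ↦ mul_le_mul_of_nonneg_right (hcoef k) (by positivity))
    (mul_lt_mul_of_pos_right (by norm_num) (by positivity))
    hsum ((hasSum_geometric_succ_of_lt_one (by positivity) hr₁).mul_left (1 / 3))
  have hdenom : 1 - r = 4 * N * (N + 1) / (2 * N + 1) ^ 2 := by rw [hr]; field_simp; ring
  refine hlt.trans_eq ?_
  rw [hsucc, hdenom, hr]
  field_simp
  ring

theorem sub_lt_log_stirlingSeq_sdiff (m : ℕ) :
    1 / (12 * ((m + 1 : ℕ) : ℝ) + 1) - 1 / (12 * ((m + 2 : ℕ) : ℝ) + 1) <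
      log (stirlingSeq (m + 1)) - log (stirlingSeq (m + 2)) := by
  have hsum := log_stirlingSeq_sdiff_hasSum m
  have hsucc : ((m + 2 : ℕ) : ℝ) = ((m + 1 : ℕ) : ℝ) + 1 := by push_cast; ring
  set N : ℝ := ((m + 1 : ℕ) : ℝ)
  have hN : 1 ≤ N := by simp [N]
  set r : ℝ := (1 / (2 * N + 1)) ^ 2 with hr
  have hr₁ : r / 3 < 1 := by
    rw [hr, div_pow, div_div, div_lt_one (by positivity)]; nlinarith
  have hterm (k : ℕ) : (r / 3) ^ (k + 1) = (1 / 3) ^ (k + 1) * r ^ (k + 1) := by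
    rw [div_eq_inv_mul, mul_pow, one_div]
  have hlt := hasSum_lt (i := 1)
    (fun k ↦ (hterm k).trans_le
      (mul_le_mul_of_nonneg_right (one_div_three_pow_succ_le k) (by positivity)))
    ((hterm 1).trans_lt (mul_lt_mul_of_pos_right (by norm_num) (by positivity)))
    (hasSum_geometric_succ_of_lt_one (by positivity) hr₁) hsum
  have hdenom : 1 - r / 3 = (12 * N ^ 2 + 12 * N + 2) / (3 * (2 * N + 1) ^ 2) := by
    rw [hr]; field_simp; ring
  refine lt_of_le_of_lt ?_ hlt
  rw [hsucc, hdenom, hr, div_sub_div _ _ (by positivity) (by positivity),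
    div_le_div_iff₀ (by positivity) (by positivity)]
  field_simp
  nlinarith

theorem tendsto_log_stirlingSeq_succ :
    Tendsto (fun n : ℕ ↦ log (stirlingSeq (n + 1))) atTop (𝓝 (log √π)) :=
  ((continuousAt_log (by positivity)).tendsto.comp tendsto_stirlingSeq_sqrt_pi).comp
    (tendsto_add_atTop_nat 1)

theorem stirlingSeq_lt_sqrt_pi_mul_exp {n : ℕ} (hn : n ≠ 0) :
    stirlingSeq n < √π * exp (1 / (12 * n)) := by
  obtain ⟨m, rfl⟩ := Nat.exists_eq_add_one_of_ne_zero hn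
  have := lt_add_of_tendsto_of_forall_sub_succ_lt tendsto_log_stirlingSeq_succ
    (by simpa using tendsto_one_div_mul_natCast_succ_add 12 0 (by norm_num))
    log_stirlingSeq_sdiff_lt m
  rwa [← log_lt_log_iff (stirlingSeq'_pos m) (by positivity),
    log_mul (by positivity) (by positivity), log_exp]

theorem sqrt_pi_mul_exp_lt_stirlingSeq {n : ℕ} (hn : n ≠ 0) :
    √π * exp (1 / (12 * n + 1)) < stirlingSeq n := by
  obtain ⟨m, rfl⟩ := Nat.exists_eq_add_one_of_ne_zero hn
  have := add_lt_of_tendsto_of_forall_lt_sub_succ tendsto_log_stirlingSeq_succ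
    (tendsto_one_div_mul_natCast_succ_add 12 1 (by norm_num))
    sub_lt_log_stirlingSeq_sdiff m
  rwa [← log_lt_log_iff (by positivity) (stirlingSeq'_pos m),
    log_mul (by positivity) (by positivity), log_exp]

end Stirling

theorem robbins_stirling (q : ℕ) (hq : 0 < q) :
    Real.sqrt (2 * π * q) * ((q : ℝ) / Real.exp 1) ^ q * Real.exp (1 / (12 * q + 1))
      < Real.Gamma (q + 1) ∧
    Real.Gamma (q + 1)
      < Real.sqrt (2 * π * q) * ((q : ℝ) / Real.exp 1) ^ q * Real.exp (1 / (12 * q)) := by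
  have hq₀ : q ≠ 0 := hq.ne'
  have hscale : 0 < √(2 * q) * (q / exp 1) ^ q := by positivity
  have hsplit : √(2 * π * q) * (q / exp 1) ^ q = √π * (√(2 * q) * (q / exp 1) ^ q) := by
    rw [show 2 * π * q = π * (2 * q) by ring, sqrt_mul pi_pos.le]; ring
  have hlower := Stirling.sqrt_pi_mul_exp_lt_stirlingSeq hq₀
  have hupper := Stirling.stirlingSeq_lt_sqrt_pi_mul_exp hq₀
  rw [Stirling.stirlingSeq, lt_div_iff₀ hscale] at hlower
  rw [Stirling.stirlingSeq, div_lt_iff₀ hscale] at hupper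
  rw [Gamma_nat_eq_factorial, hsplit]
  constructor <;> linarith
end

section
/- Let n > 13 be an integer and let a, b be positive integers with a + b = n and a/n ∈ (0.25, 0.75). Let I = Γ(a+1)Γ(b+1)/Γ(n+2) and L = (2π/n)^{1/2}(a/n)^{a+1/2}(b/n)^{b+1/2}. Then I/L ≤ 1 - 1/(26n). -/
/-!
Write `m! = s(m) √(2m) (m/e)^m`, where `s` is the Stirling sequence. Then `I / L` is exactly
`s(a) s(b) / s(n) · n / ((n + 1) √π)`, and the two-sided Stirling bounds
`√π ≤ s(m) ≤ √π e^{1/(12m)}` give `I / L ≤ e^{1/(12a) + 1/(12b)} · n / (n + 1)`.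
When `a/n ∈ (1/4, 3/4)` we have `ab ≥ 3n²/16`, so the exponent is at most `4/(9n)`, and
`e^{4/(9n)} ≤ 9n/(9n - 4)` turns the bound into a rational function of `n` that is
at most `1 - 1/(26n)`.
-/

open Real Filter Topology Stirling
open scoped Nat

namespace Stirling

theorem monotone_log_stirlingSeq_succ_sub :
    Monotone fun k : ℕ ↦ log (stirlingSeq (k + 1)) - 1 / (12 * ((k : ℝ) + 1)) := by
  refine monotone_nat_of_le_succ fun k ↦ ?_
  have h := log_stirlingSeq_sdiff_le (k + 1)
  have : (1 : ℝ) / (12 * ((k + 1 : ℕ) : ℝ) * ((k + 1 : ℕ) + 1))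
      = 1 / (12 * ((k : ℝ) + 1)) - 1 / (12 * (((k + 1 : ℕ) : ℝ) + 1)) := by
    push_cast; field_simp; ring
  linarith

theorem stirlingSeq_le_sqrt_pi_mul_exp {n : ℕ} (hn : n ≠ 0) :
    stirlingSeq n ≤ √π * exp (1 / (12 * n)) := by
  obtain ⟨k, rfl⟩ := Nat.exists_eq_succ_of_ne_zero hn
  have hlim : Tendsto (fun k : ℕ ↦ log (stirlingSeq (k + 1)) - 1 / (12 * ((k : ℝ) + 1)))
      atTop (𝓝 (log √π - 0)) := by
    refine ((tendsto_stirlingSeq_sqrt_pi.comp (tendsto_add_atTop_nat 1)).log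
      (by positivity)).sub ?_
    exact tendsto_const_nhds.div_atTop (tendsto_atTop_add_const_right _ _
      tendsto_natCast_atTop_atTop |>.const_mul_atTop (by norm_num))
  have hle := monotone_log_stirlingSeq_succ_sub.ge_of_tendsto hlim k
  rw [← exp_log (stirlingSeq'_pos k), ← exp_log (sqrt_pos.2 pi_pos), ← exp_add]
  push_cast
  exact exp_le_exp.2 (by linarith)

theorem factorial_eq_stirlingSeq_mul {n : ℕ} (hn : n ≠ 0) :
    (n ! : ℝ) = stirlingSeq n * (√(2 * n) * (n / exp 1) ^ n) := by
  rw [stirlingSeq, div_mul_cancel₀]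
  positivity

theorem stirlingSeq_mul_stirlingSeq_div_le {a b : ℕ} (ha : a ≠ 0) (hb : b ≠ 0) :
    stirlingSeq a * stirlingSeq b / stirlingSeq (a + b)
      ≤ √π * exp (1 / (12 * a) + 1 / (12 * b)) := by
  have hpi : 0 < √π := sqrt_pos.2 pi_pos
  calc stirlingSeq a * stirlingSeq b / stirlingSeq (a + b)
      ≤ (√π * exp (1 / (12 * a))) * (√π * exp (1 / (12 * b))) / √π := by
        gcongr
        · exact hpi.le.trans (sqrt_pi_le_stirlingSeq hb)
        · exact stirlingSeq_le_sqrt_pi_mul_exp ha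
        · exact stirlingSeq_le_sqrt_pi_mul_exp hb
        · exact sqrt_pi_le_stirlingSeq (by omega)
    _ = √π * exp (1 / (12 * a) + 1 / (12 * b)) := by
        rw [exp_add]; field_simp

end Stirling

theorem rpow_natCast_add_half {x : ℝ} (hx : 0 ≤ x) (k : ℕ) :
    x ^ ((k : ℝ) + 1 / 2) = x ^ k * √x := by
  rw [rpow_add' hx (by positivity), rpow_natCast, sqrt_eq_rpow]

theorem gamma_mul_gamma_div_gamma_div_laplace_eq {n a b : ℕ} (ha : a ≠ 0) (hb : b ≠ 0)
    (hab : a + b = n) :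
    (Gamma (a + 1) * Gamma (b + 1) / Gamma (n + 2)) /
        (√(2 * π / n) * ((a : ℝ) / n) ^ ((a : ℝ) + 1 / 2) * ((b : ℝ) / n) ^ ((b : ℝ) + 1 / 2))
      = stirlingSeq a * stirlingSeq b / stirlingSeq n * (n / ((n + 1) * √π)) := by
  have hn : n ≠ 0 := by omega
  have hGamma : Gamma ((n : ℝ) + 2) = (n + 1) * n ! := by
    rw [show (n : ℝ) + 2 = (n + 1 : ℕ) + 1 by push_cast; ring, Gamma_nat_eq_factorial,
      Nat.factorial_succ]
    push_cast; ring
  have hsn : 0 < stirlingSeq n := (sqrt_pos.2 pi_pos).trans_le (sqrt_pi_le_stirlingSeq hn)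
  rw [Gamma_nat_eq_factorial, Gamma_nat_eq_factorial, hGamma, factorial_eq_stirlingSeq_mul ha,
    factorial_eq_stirlingSeq_mul hb, factorial_eq_stirlingSeq_mul hn,
    rpow_natCast_add_half (by positivity), rpow_natCast_add_half (by positivity)]
  subst hab
  push_cast
  rw [sqrt_div (by positivity), sqrt_div (by positivity), sqrt_div (by positivity),
    sqrt_mul (by positivity), sqrt_mul (by positivity), sqrt_mul (by positivity),
    sqrt_mul (by positivity)]
  have hsq : √((a : ℝ) + b) ^ 2 = a + b := sq_sqrt (by positivity)
  field_simp
  rw [hsq]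
  simp only [div_pow, pow_add]
  field_simp

theorem gamma_mul_gamma_div_gamma_div_laplace_le {n a b : ℕ} (ha : a ≠ 0) (hb : b ≠ 0)
    (hab : a + b = n) :
    (Gamma (a + 1) * Gamma (b + 1) / Gamma (n + 2)) /
        (√(2 * π / n) * ((a : ℝ) / n) ^ ((a : ℝ) + 1 / 2) * ((b : ℝ) / n) ^ ((b : ℝ) + 1 / 2))
      ≤ exp (1 / (12 * a) + 1 / (12 * b)) * (n / (n + 1)) := by
  rw [gamma_mul_gamma_div_gamma_div_laplace_eq ha hb hab]
  calc stirlingSeq a * stirlingSeq b / stirlingSeq n * (n / ((n + 1) * √π))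
      ≤ √π * exp (1 / (12 * a) + 1 / (12 * b)) * (n / ((n + 1) * √π)) := by
        gcongr
        exact hab ▸ stirlingSeq_mul_stirlingSeq_div_le ha hb
    _ = exp (1 / (12 * a) + 1 / (12 * b)) * (n / (n + 1)) := by
        have : 0 < √π := sqrt_pos.2 pi_pos
        field_simp

theorem one_div_add_one_div_le_of_lt_four_mul {x y : ℝ} (hx : x + y < 4 * x)
    (hy : x + y < 4 * y) : 1 / x + 1 / y ≤ 16 / (3 * (x + y)) := by
  have : 0 < x := by linarith
  have : 0 < y := by linarith
  rw [div_add_div _ _ (by positivity) (by positivity),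
    div_le_div_iff₀ (by positivity) (by positivity)]
  -- `16xy - 3(x + y)² = (4x - (x + y))(4y - (x + y))`
  nlinarith [mul_pos (sub_pos.2 hx) (sub_pos.2 hy)]

theorem exp_four_div_mul_div_add_one_le {x : ℝ} (hx : 1 ≤ x) :
    exp (4 / (9 * x)) * (x / (x + 1)) ≤ 1 - 1 / (26 * x) := by
  have hexp : exp (4 / (9 * x)) ≤ 9 * x / (9 * x - 4) := by
    convert exp_bound_div_one_sub_of_interval (x := 4 / (9 * x)) (by positivity) ?_ using 1
    · field_simp
    · rw [div_lt_one (by positivity)]; linarith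
  calc exp (4 / (9 * x)) * (x / (x + 1)) ≤ 9 * x / (9 * x - 4) * (x / (x + 1)) := by gcongr
    _ ≤ 1 - 1 / (26 * x) := by
      rw [div_mul_div_comm, one_sub_div (by positivity),
        div_le_div_iff₀ (by nlinarith) (by positivity)]
      nlinarith

theorem bernoulli_laplace_deterministic_lower_general (n a b : ℕ)
    (ha : 0 < a) (hb : 0 < b) (hab : a + b = n)
    (hlo : (0.25 : ℝ) < (a : ℝ) / n) (hhi : (a : ℝ) / n < (0.75 : ℝ)) :
    (Real.Gamma (a + 1) * Real.Gamma (b + 1) / Real.Gamma (n + 2)) /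
        (Real.sqrt (2 * π / n) * ((a : ℝ) / n) ^ ((a : ℝ) + 1 / 2)
          * ((b : ℝ) / n) ^ ((b : ℝ) + 1 / 2))
      ≤ 1 - 1 / (26 * n) := by
  have hn : (1 : ℝ) ≤ n := by exact_mod_cast (by omega : 1 ≤ n)
  have hnab : (n : ℝ) = a + b := by exact_mod_cast hab.symm
  rw [lt_div_iff₀ (by positivity)] at hlo
  rw [div_lt_iff₀ (by positivity)] at hhi
  have hexponent : 1 / (12 * (a : ℝ)) + 1 / (12 * b) ≤ 4 / (9 * n) := by
    have := one_div_add_one_div_le_of_lt_four_mul (x := a) (y := b) (by linarith) (by linarith)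
    rw [← hnab] at this
    calc 1 / (12 * (a : ℝ)) + 1 / (12 * b) = (1 / a + 1 / b) / 12 := by ring
      _ ≤ 16 / (3 * n) / 12 := by gcongr
      _ = 4 / (9 * n) := by ring
  calc _ ≤ exp (1 / (12 * a) + 1 / (12 * b)) * (n / (n + 1)) :=
        gamma_mul_gamma_div_gamma_div_laplace_le ha.ne' hb.ne' hab
    _ ≤ exp (4 / (9 * n)) * (n / (n + 1)) := by gcongr
    _ ≤ 1 - 1 / (26 * n) := exp_four_div_mul_div_add_one_le hn

theorem bernoulli_laplace_deterministic_lower (n a b : ℕ) (hn : 13 < n)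
    (ha : 0 < a) (hb : 0 < b) (hab : a + b = n)
    (hlo : (0.25 : ℝ) < (a : ℝ) / n) (hhi : (a : ℝ) / n < (0.75 : ℝ)) :
    (Real.Gamma (a + 1) * Real.Gamma (b + 1) / Real.Gamma (n + 2)) /
        (Real.sqrt (2 * π / n) * ((a : ℝ) / n) ^ ((a : ℝ) + 1 / 2)
          * ((b : ℝ) / n) ^ ((b : ℝ) + 1 / 2))
      ≤ 1 - 1 / (26 * n) :=
  bernoulli_laplace_deterministic_lower_general n a b ha hb hab hlo hhi
end
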